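/- arXiv:math/0411057 — 3 statements merged into one kernel-verified Lean document; each statement's English description precedes it below -/
import Mathlib

section
/- Let α be a type and F = FreeGroup α the free group on α, with generators x_j = FreeGroup.of j. For every i : α there exists a unique map d : F → ℤ[F] such that (i) d(x_j) = 1 if j = i and d(x_j) = 0 if j ≠ i, and (ii) d satisfies the Fox product rule d(g·h) = d(g) + d(h)·g⁻¹ for all g, h ∈ F. (This map is the i-th free differential ∂_i of the free differential calculus used in Section 6 of the paper.) -/
/-!
Let `G` act on `ℤ[G]` by `g • x = x * g⁻¹` and form the semidirect product
`ℤ[G] ⋊ G` (with `ℤ[G]` written multiplicatively). Its multiplication is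
`(a, g) (b, h) = (a + b g⁻¹, g h)`, so `d` satisfies the Fox product rule exactly when
`g ↦ (d g, g)` is a group homomorphism. On a free group such homomorphisms exist with
arbitrary prescribed values on the generators and are determined by them, which gives
existence and uniqueness of `d` at once.
-/

/-- A map `d : G → ℤ[G]` satisfies the *Fox product rule* if
`d (g * h) = d g + d h * g⁻¹` for all `g, h : G`, where group elements are
identified with basis elements of the integral group ring `MonoidAlgebra ℤ G`. -/
def FoxRule {G : Type*} [Group G] (d : G → MonoidAlgebra ℤ G) : Prop :=
  ∀ g h : G, d (g * h) = d g + d h * MonoidAlgebra.of ℤ G (g⁻¹)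

open SemidirectProduct Multiplicative

noncomputable def foxAction (G : Type*) [Group G] :
    G →* MulAut (Multiplicative (MonoidAlgebra ℤ G)) where
  toFun g := AddEquiv.toMultiplicative (AddAut.mulRight ((MonoidAlgebra.of ℤ G).toHomUnits g⁻¹))
  map_one' := by ext; simp
  map_mul' g h := by ext; simp [mul_assoc]

section FoxRule

variable {G : Type*} [Group G]

@[simp]
theorem toAdd_foxAction_apply (g : G) (x : Multiplicative (MonoidAlgebra ℤ G)) :
    toAdd (foxAction G g x) = toAdd x * MonoidAlgebra.of ℤ G g⁻¹ :=
  rfl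

theorem FoxRule.apply_one {d : G → MonoidAlgebra ℤ G} (hd : FoxRule d) : d 1 = 0 := by
  have h := hd 1 1
  rw [mul_one, inv_one, map_one, mul_one] at h
  exact left_eq_add.mp h

noncomputable def FoxRule.toMonoidHom {d : G → MonoidAlgebra ℤ G} (hd : FoxRule d) :
    G →* Multiplicative (MonoidAlgebra ℤ G) ⋊[foxAction G] G where
  toFun g := ⟨ofAdd (d g), g⟩
  map_one' := SemidirectProduct.ext hd.apply_one rfl
  map_mul' g h := SemidirectProduct.ext (hd g h) rfl

theorem foxRule_of_right_eq (σ : G →* Multiplicative (MonoidAlgebra ℤ G) ⋊[foxAction G] G)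
    (hσ : ∀ g, (σ g).right = g) : FoxRule fun g => toAdd (σ g).left := by
  intro g h
  dsimp only
  rw [map_mul, mul_left, toAdd_mul, toAdd_foxAction_apply, hσ]

end FoxRule

section FreeGroup

variable {α : Type*}

theorem FoxRule.freeGroup_ext {d d' : FreeGroup α → MonoidAlgebra ℤ (FreeGroup α)}
    (hd : FoxRule d) (hd' : FoxRule d') (h : ∀ j, d (FreeGroup.of j) = d' (FreeGroup.of j)) :
    d = d' := by
  have hσ : hd.toMonoidHom = hd'.toMonoidHom :=
    FreeGroup.ext_hom _ _ fun j => SemidirectProduct.ext (h j) rfl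
  funext g
  exact congrArg (fun x => toAdd x.left) (DFunLike.congr_fun hσ g)

noncomputable def foxLift (δ : α → MonoidAlgebra ℤ (FreeGroup α)) :
    FreeGroup α →* Multiplicative (MonoidAlgebra ℤ (FreeGroup α)) ⋊[foxAction _] FreeGroup α :=
  FreeGroup.lift fun j => ⟨ofAdd (δ j), FreeGroup.of j⟩

theorem foxLift_of (δ : α → MonoidAlgebra ℤ (FreeGroup α)) (j : α) :
    foxLift δ (FreeGroup.of j) = ⟨ofAdd (δ j), FreeGroup.of j⟩ :=
  FreeGroup.lift_apply_of

theorem right_foxLift (δ : α → MonoidAlgebra ℤ (FreeGroup α)) (g : FreeGroup α) :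
    (foxLift δ g).right = g := by
  have : rightHom.comp (foxLift δ) = MonoidHom.id _ :=
    FreeGroup.ext_hom _ _ fun j => by simp [foxLift_of, rightHom_eq_right]
  exact DFunLike.congr_fun this g

noncomputable def foxDerivative (δ : α → MonoidAlgebra ℤ (FreeGroup α)) :
    FreeGroup α → MonoidAlgebra ℤ (FreeGroup α) :=
  fun g => toAdd (foxLift δ g).left

theorem foxDerivative_of (δ : α → MonoidAlgebra ℤ (FreeGroup α)) (j : α) :
    foxDerivative δ (FreeGroup.of j) = δ j := by
  rw [foxDerivative, foxLift_of, toAdd_ofAdd]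

theorem foxRule_foxDerivative (δ : α → MonoidAlgebra ℤ (FreeGroup α)) :
    FoxRule (foxDerivative δ) :=
  foxRule_of_right_eq _ (right_foxLift δ)

theorem existsUnique_foxRule (δ : α → MonoidAlgebra ℤ (FreeGroup α)) :
    ∃! d : FreeGroup α → MonoidAlgebra ℤ (FreeGroup α),
      (∀ j, d (FreeGroup.of j) = δ j) ∧ FoxRule d := by
  refine ⟨foxDerivative δ, ⟨foxDerivative_of δ, foxRule_foxDerivative δ⟩, ?_⟩
  rintro d ⟨hd_of, hd⟩
  exact hd.freeGroup_ext (foxRule_foxDerivative δ) fun j => by rw [hd_of, foxDerivative_of]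

end FreeGroup

/-- For every generator index `i`, there is a unique map `d : F → ℤ[F]` on the free
group `F = FreeGroup α` with `d (x_j) = δ_{ij}` satisfying the Fox product rule:
the `i`-th free differential `∂_i` of the free differential calculus. -/
theorem free_differential_exists_unique (α : Type*) [DecidableEq α] (i : α) :
    ∃! d : FreeGroup α → MonoidAlgebra ℤ (FreeGroup α),
      (∀ j : α, d (FreeGroup.of j) = if j = i then 1 else 0) ∧ FoxRule d :=
  existsUnique_foxRule fun j => if j = i then 1 else 0
end

section
/- Let G be a group and let d : G → ℤ[G] satisfy the Fox product rule. If x, y ∈ G and d(x) = 0, then, writing yˣ = x⁻¹·y·x, one has d([y, yˣ]) = d(y)·(1 + x·y⁻¹ − (yˣ)⁻¹·[yˣ, y] − x·[yˣ, y]) in ℤ[G]. (This is the identity d([y,yˣ]) = (dy)·p with p = 1 + xy⁻¹ − (yˣ)⁻¹[yˣ,y] − x[yˣ,y], established in Case 1 of the proof of Lemma 6.6.) -/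
open scoped commutatorElement

/-! The product rule expands `d ⁅g, h⁆` as a combination of `d g` and `d h` with coefficients in
`ℤ[G]`. When `d x = 0`, conjugation by `x` acts on `d` as right multiplication by `x`, so
`d (x⁻¹ y x) = d y · x` and both terms of the expansion of `d ⁅y, x⁻¹ y x⁆` become multiples
of `d y`. -/

namespace FoxRule

variable {G : Type*} [Group G] {d : G → MonoidAlgebra ℤ G}

local notation "ι" => MonoidAlgebra.of ℤ G

theorem map_one (hd : FoxRule d) : d 1 = 0 := by
  simpa [← MonoidAlgebra.one_def] using hd 1 1

theorem map_inv (hd : FoxRule d) (g : G) : d g⁻¹ = -(d g * ι g) := by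
  have h := congrArg (· * ι g) (hd g g⁻¹)
  simp only [mul_inv_cancel, hd.map_one, zero_mul, add_mul, mul_assoc] at h
  rw [← map_mul, inv_mul_cancel, _root_.map_one, mul_one] at h
  exact eq_neg_of_add_eq_zero_right h.symm

theorem map_conj_of_eq_zero (hd : FoxRule d) {x : G} (hx : d x = 0) (y : G) :
    d (x⁻¹ * y * x) = d y * ι x := by
  rw [hd, hd, hd.map_inv, hx]
  simp

theorem map_commutatorElement (hd : FoxRule d) (g h : G) :
    d ⁅g, h⁆ = d g * (1 - ι (h⁻¹ * ⁅h, g⁆)) + d h * (ι g⁻¹ - ι ⁅h, g⁆) := by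
  have hgh : h⁻¹ * ⁅h, g⁆ = g * h⁻¹ * g⁻¹ := by rw [commutatorElement_def]; group
  rw [hgh, commutatorElement_def, commutatorElement_def, hd, hd, hd, hd.map_inv, hd.map_inv]
  simp only [map_mul, mul_inv_rev, inv_inv, neg_mul, mul_sub, mul_one, mul_assoc]
  abel

end FoxRule

/-- If `d x = 0` then, for `yˣ = x⁻¹ y x`,
`d ⁅y, yˣ⁆ = d y * (1 + x y⁻¹ − (yˣ)⁻¹ ⁅yˣ, y⁆ − x ⁅yˣ, y⁆)`. -/
theorem foxRule_commutator_conj {G : Type*} [Group G] (d : G → MonoidAlgebra ℤ G)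
    (hd : FoxRule d) (x y : G) (hx : d x = 0) :
    d ⁅y, x⁻¹ * y * x⁆ =
      d y * (1 + MonoidAlgebra.of ℤ G (x * y⁻¹)
        - MonoidAlgebra.of ℤ G ((x⁻¹ * y * x)⁻¹ * ⁅x⁻¹ * y * x, y⁆)
        - MonoidAlgebra.of ℤ G (x * ⁅x⁻¹ * y * x, y⁆)) := by
  rw [hd.map_commutatorElement, hd.map_conj_of_eq_zero hx]
  simp only [map_mul, mul_assoc, mul_sub, mul_add, mul_one]
  abel
end

section
/- Let G and Q be groups, ψ : G → Q a group homomorphism, and let ψ̃ : ℤ[G] → ℤ[Q] be the induced ring homomorphism. Let x, y ∈ G with yˣ = x⁻¹·y·x, and suppose ψ([yˣ, y]) = 1 and ψ(y) ≠ 1, and suppose further that there is a group homomorphism q : Q → A with q(ψ(x)) ≠ 1 and q(ψ(y)) = 1 and q(ψ(yˣ)) = 1. Then the element 1 + ψ(x·y⁻¹) − ψ((yˣ)⁻¹) − ψ(x) is nonzero in ℤ[Q]. (This is the nontriviality of rπ_{k+1}(p) established in Case 1 of the proof of Lemma 6.6: the four group elements project under q to 1, q(ψ(x)), 1, q(ψ(x)),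 so the only possible pairing would force ψ(x) = ψ(x·y⁻¹), contradicting ψ(y) ≠ 1.) -/
open scoped commutatorElement

namespace MonoidAlgebra

theorem of_add_of_eq_of_add_of_iff {R M : Type*} [Semiring R] [CharZero R] [MulOneClass M]
    {m₁ m₂ m₁' m₂' : M} :
    of R M m₁ + of R M m₂ = of R M m₁' + of R M m₂' ↔
      m₁ = m₁' ∧ m₂ = m₂' ∨ m₁ = m₂' ∧ m₂ = m₁' := by
  simp only [of_apply, single_add_single_inj one_ne_zero one_ne_zero, one_add_one_eq_two,
    two_ne_zero, false_and, or_false, true_and]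

end MonoidAlgebra

open MonoidAlgebra in
theorem p_nontrivial_general {G Q A : Type*} [Group G] [Group Q] [Group A]
    (ψ : G →* Q) (x y : G)
    (h2 : ψ y ≠ 1)
    (q : Q →* A) (hx : q (ψ x) ≠ 1) :
    (1 + MonoidAlgebra.of ℤ Q (ψ (x * y⁻¹))
      - MonoidAlgebra.of ℤ Q (ψ ((x⁻¹ * y * x)⁻¹))
      - MonoidAlgebra.of ℤ Q (ψ x) : MonoidAlgebra ℤ Q) ≠ 0 := by
  intro h
  have hsum : of ℤ Q 1 + of ℤ Q (ψ (x * y⁻¹)) =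
      of ℤ Q (ψ ((x⁻¹ * y * x)⁻¹)) + of ℤ Q (ψ x) := by
    rw [map_one, ← sub_eq_zero, ← h]
    abel
  rcases of_add_of_eq_of_add_of_iff.1 hsum with ⟨-, hxy⟩ | ⟨hx1, -⟩
  · exact h2 (by simpa using hxy)
  · exact hx (by rw [← hx1, map_one])

/-- Nontriviality of `rπ_{k+1}(p)`: if `ψ ⁅yˣ, y⁆ = 1`, `ψ y ≠ 1`, and there
is a further quotient `q` with `q (ψ x) ≠ 1`, `q (ψ y) = 1`, `q (ψ yˣ) = 1`,
then `1 + ψ(x y⁻¹) − ψ((yˣ)⁻¹) − ψ(x)` is nonzero in `ℤ[Q]`. -/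
theorem p_nontrivial {G Q A : Type*} [Group G] [Group Q] [Group A]
    (ψ : G →* Q) (x y : G)
    (h1 : ψ ⁅x⁻¹ * y * x, y⁆ = 1) (h2 : ψ y ≠ 1)
    (q : Q →* A) (hx : q (ψ x) ≠ 1) (hy : q (ψ y) = 1)
    (hyx : q (ψ (x⁻¹ * y * x)) = 1) :
    (1 + MonoidAlgebra.of ℤ Q (ψ (x * y⁻¹))
      - MonoidAlgebra.of ℤ Q (ψ ((x⁻¹ * y * x)⁻¹))
      - MonoidAlgebra.of ℤ Q (ψ x) : MonoidAlgebra ℤ Q) ≠ 0 :=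
  p_nontrivial_general ψ x y h2 q hx
end
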